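/- Let n ≥ 1 and W : (Fin n → ℝ⁴) → ℂ. Define H : ℝ → ℂ by H(t) = 1 if t > 0 and H(t) = 0 otherwise, and define τ : (Fin n → ℝ⁴) → ℂ by τ(x) := Σ_{P ∈ Perm(Fin n)} ( ∏_{k=1}^{n−1} H( (x_{P(k)})₀ − (x_{P(k+1)})₀ ) ) · W(x ∘ P). Assume: (i) W is invariant under the restricted Lorentz group, i.e. W(Λ·x₁, …, Λ·xₙ) = W(x₁, …, xₙ) for all Λ ∈ L₊↑; (ii) τ(Λ·x₁, …, Λ·xₙ) = τ(x₁, …, xₙ) for every Λ ∈ L₊↑ and every configuration (x₁,…,xₙ) such that both (x₁,…,xₙ) and (Λ·x₁,…,Λ·xₙ) have pairwise distinct time components. Let (x₁,…,xₙ) satisfy (x₁)₀ > (x₂)₀ > … > (xₙ)₀ and suppose there exists Λ ∈ L₊↑ with (Λ·x₁)₀ < (Λ·x₂)₀ < … < (Λ·xₙ)₀. Then weak local commutativity holds at (x₁,…,xₙ): W(x₁, x₂, …, xₙ) = W(xₙ, …, x₂, x₁). -/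

import Mathlib

/-- The Minkowski metric matrix `G = diag(1, −1, −1, −1)`. -/
def minkMetric : Matrix (Fin 4) (Fin 4) ℝ := Matrix.diagonal ![1, -1, -1, -1]

/-- A matrix belongs to the restricted Lorentz group `L₊↑` if `Λᵀ G Λ = G`,
`det Λ = 1` and `Λ₀₀ ≥ 1`. -/
def IsRestrictedLorentz (Λ : Matrix (Fin 4) (Fin 4) ℝ) : Prop :=
  Λ.transpose * minkMetric * Λ = minkMetric ∧ Λ.det = 1 ∧ 1 ≤ Λ 0 0

/-! On a configuration with pairwise distinct times exactly one term of the τ-sum survives: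
the one whose permutation lists the points in decreasing time (unique, since two strictly
antitone enumerations of the same finite set coincide). Hence `τ x = W x`, while
`τ (Λx) = W (Λx ∘ rev) = W (x ∘ rev)` by Lorentz invariance of `W`, and invariance of `τ`
between the two time-ordered configurations `x` and `Λx` identifies the two. -/

noncomputable section

namespace TimeOrdering

variable {n : ℕ}

lemma strictAnti_iff_forall_succ_lt {α : Type*} [Preorder α] (t : Fin n → α) :
    StrictAnti t ↔ ∀ i : Fin (n - 1),
      t ⟨i.1 + 1, by omega⟩ < t (Fin.castLE (Nat.sub_le n 1) i) := by
  cases n with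
  | zero => exact ⟨fun _ i => i.elim0, fun _ a => a.elim0⟩
  | succ m => exact Fin.strictAnti_iff_succ_lt

lemma perm_eq_of_strictAnti {ι α : Type*} [LinearOrder ι] [WellFoundedGT ι] [Preorder α]
    {t : ι → α} {P σ : Equiv.Perm ι} (hP : StrictAnti (t ∘ P)) (hσ : StrictAnti (t ∘ σ)) :
    P = σ := by
  have hrange : Set.range (t ∘ P) = Set.range (t ∘ σ) := by
    simp only [Set.range_comp, P.range_eq_univ, σ.range_eq_univ]
  have ht : t.Injective := by
    simpa using hσ.injective.comp σ.symm.injective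
  exact Equiv.ext fun i => ht (congrFun ((hP.range_inj hσ).1 hrange) i)

def heavisideChain {R : Type*} [CommSemiring R] (t : Fin n → ℝ) : R :=
  ∏ i : Fin (n - 1),
    if 0 < t (Fin.castLE (Nat.sub_le n 1) i) - t ⟨i.1 + 1, by omega⟩ then 1 else 0

lemma heavisideChain_eq_ite {R : Type*} [CommSemiring R] (t : Fin n → ℝ) :
    (heavisideChain t : R) = if StrictAnti t then 1 else 0 := by
  simp_rw [heavisideChain, strictAnti_iff_forall_succ_lt, sub_pos]
  split_ifs with h
  · exact Finset.prod_eq_one fun i _ => if_pos (h i)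
  · obtain ⟨i, hi⟩ := not_forall.1 h
    exact Finset.prod_eq_zero (Finset.mem_univ i) (if_neg hi)

def timeOrdered {E R : Type*} [CommSemiring R] (time : E → ℝ) (W : (Fin n → E) → R)
    (x : Fin n → E) : R :=
  ∑ P : Equiv.Perm (Fin n), heavisideChain (fun i => time (x (P i))) * W (x ∘ P)

lemma timeOrdered_eq_of_strictAnti {E R : Type*} [CommSemiring R] (time : E → ℝ)
    (W : (Fin n → E) → R) {x : Fin n → E} {σ : Equiv.Perm (Fin n)}
    (hσ : StrictAnti fun i => time (x (σ i))) :
    timeOrdered time W x = W (x ∘ σ) := by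
  rw [timeOrdered, Finset.sum_eq_single_of_mem σ (Finset.mem_univ σ), heavisideChain_eq_ite,
    if_pos hσ, one_mul]
  intro P _ hPσ
  have hP : ¬StrictAnti fun i => time (x (P i)) := fun hP =>
    hPσ (perm_eq_of_strictAnti (t := fun i => time (x i)) hP hσ)
  rw [heavisideChain_eq_ite, if_neg hP, zero_mul]

end TimeOrdering

end

open TimeOrdering

/-- **Weak local commutativity from Lorentz invariance of the τ- and
W-functions.** Let `τ` be the time-ordered function built from the `n`-point
function `W` by summing the Heaviside-ordered permutations, `W` Lorentz
invariant, and `τ` Lorentz invariant on configurations with pairwise distinct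
time components. If `(x₁,…,xₙ)` has strictly decreasing time components and
some restricted Lorentz transformation makes its time components strictly
increasing, then `W(x₁,…,xₙ) = W(xₙ,…,x₁)`. -/
theorem weak_local_commutativity
    (n : ℕ)
    (W : (Fin n → (Fin 4 → ℝ)) → ℂ)
    (τ : (Fin n → (Fin 4 → ℝ)) → ℂ)
    (hτ : ∀ x : Fin n → (Fin 4 → ℝ), τ x =
      ∑ P : Equiv.Perm (Fin n),
        (∏ i : Fin (n - 1),
          (if 0 < (x (P (Fin.castLE (Nat.sub_le n 1) i))) 0
                - (x (P ⟨i.1 + 1, by have := i.2; omega⟩)) 0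
            then (1 : ℂ) else 0)) * W (x ∘ ⇑P))
    (hW : ∀ Λ : Matrix (Fin 4) (Fin 4) ℝ, IsRestrictedLorentz Λ →
      ∀ x : Fin n → (Fin 4 → ℝ), W (fun i => Λ.mulVec (x i)) = W x)
    (hτinv : ∀ Λ : Matrix (Fin 4) (Fin 4) ℝ, IsRestrictedLorentz Λ →
      ∀ x : Fin n → (Fin 4 → ℝ),
        (∀ i j : Fin n, i ≠ j → (x i) 0 ≠ (x j) 0) →
        (∀ i j : Fin n, i ≠ j → (Λ.mulVec (x i)) 0 ≠ (Λ.mulVec (x j)) 0) →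
        τ (fun i => Λ.mulVec (x i)) = τ x)
    (x : Fin n → (Fin 4 → ℝ))
    (hx : ∀ i j : Fin n, i < j → (x j) 0 < (x i) 0)
    (hΛ : ∃ Λ : Matrix (Fin 4) (Fin 4) ℝ, IsRestrictedLorentz Λ ∧
      ∀ i j : Fin n, i < j → (Λ.mulVec (x i)) 0 < (Λ.mulVec (x j)) 0) :
    W x = W (x ∘ Fin.rev) := by
  obtain ⟨Λ, hΛ, hΛx⟩ := hΛ
  have hτ : τ = timeOrdered (· 0) W := funext hτ
  have hdec : StrictAnti fun i => x i 0 := hx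
  have hinc : StrictMono fun i => (Λ.mulVec (x i)) 0 := hΛx
  calc W x
      = τ x := by rw [hτ]; exact (timeOrdered_eq_of_strictAnti (σ := 1) _ W hdec).symm
    _ = τ (fun i => Λ.mulVec (x i)) :=
        (hτinv Λ hΛ x (fun _ _ => hdec.injective.ne) fun _ _ => hinc.injective.ne).symm
    _ = W (fun i => Λ.mulVec (x (Fin.revPerm i))) := by
        rw [hτ]; exact timeOrdered_eq_of_strictAnti _ W (hinc.comp_strictAnti Fin.rev_strictAnti)
    _ = W (x ∘ Fin.rev) := hW Λ hΛ (x ∘ Fin.rev)
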